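/- Let A, B, C, D, E be real numbers with C < 0, B ≤ 0, A ≠ 0, A + B ≤ 0, Δ := B² C² + A C (A E − B D) ≥ 0, and suppose C x² + D x + E ≠ 0 for all x ∈ [0,1]. Define f(x) = (A x + B)/(C x² + D x + E) and r = (−B C + √Δ)/(A C). Then f is monotone nondecreasing on [0,1] ∩ (−∞, r] and monotone nonincreasing on [0,1] ∩ [r, ∞). -/

import Mathlib

/-!
With `s = √Δ` and `u(x) = C (A x + B)`, the numerator of `f'` is
`M(x) = -A C x² - 2 B C x + (A E - B D)`, and `A C · M(x) = s² - u(x)² = A C (r - x) (s + u(x))`,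
so `M(x) = (r - x)(s + u(x))`. On `[0, 1]` the linear function `A x + B` is nonpositive (it is at
its endpoints), hence `u ≥ 0` there, and `f'` has the sign of `r - x`.
-/

open Set

theorem monotoneOn_Iic_antitoneOn_Ici_of_hasDerivAt {S : Set ℝ} (hS : Convex ℝ S)
    {f w : ℝ → ℝ} {r : ℝ} (hf : ∀ x ∈ S, HasDerivAt f ((r - x) * w x) x)
    (hw : ∀ x ∈ S, 0 ≤ w x) :
    MonotoneOn f (S ∩ Iic r) ∧ AntitoneOn f (S ∩ Ici r) := by
  have hcont (T : Set ℝ) (hT : T ⊆ S) : ContinuousOn f T := fun x hx =>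
    (hf x (hT hx)).continuousAt.continuousWithinAt
  have hderiv (T : Set ℝ) (hT : T ⊆ S) (x : ℝ) (hx : x ∈ interior T) :
      HasDerivWithinAt f ((r - x) * w x) (interior T) x :=
    (hf x (hT (interior_subset hx))).hasDerivWithinAt
  constructor
  · refine monotoneOn_of_hasDerivWithinAt_nonneg (hS.inter (convex_Iic r))
      (hcont _ inter_subset_left) (hderiv _ inter_subset_left) fun x hx => ?_
    obtain ⟨hxS, hxr⟩ := interior_subset hx
    exact mul_nonneg (sub_nonneg.2 hxr) (hw x hxS)
  · refine antitoneOn_of_hasDerivWithinAt_nonpos (hS.inter (convex_Ici r))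
      (hcont _ inter_subset_left) (hderiv _ inter_subset_left) fun x hx => ?_
    obtain ⟨hxS, hxr⟩ := interior_subset hx
    exact mul_nonpos_of_nonpos_of_nonneg (sub_nonpos.2 hxr) (hw x hxS)

theorem hasDerivAt_linear_div_quadratic (A B C D E : ℝ) {x : ℝ}
    (hx : C * x ^ 2 + D * x + E ≠ 0) :
    HasDerivAt (fun y => (A * y + B) / (C * y ^ 2 + D * y + E))
      ((-(A * C) * x ^ 2 - 2 * (B * C) * x + (A * E - B * D)) / (C * x ^ 2 + D * x + E) ^ 2) x := by
  have hnum : HasDerivAt (fun y => A * y + B) A x := by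
    simpa using ((hasDerivAt_id x).const_mul A).add_const B
  have hden : HasDerivAt (fun y => C * y ^ 2 + D * y + E) (2 * C * x + D) x := by
    have := (((hasDerivAt_pow 2 x).const_mul C).add ((hasDerivAt_id x).const_mul D)).add_const E
    simpa using this.congr_deriv (by ring)
  exact (hnum.div hden hx).congr_deriv (by ring)

theorem deriv_numerator_linear_div_quadratic_eq_mul {A B C D E : ℝ} (hA : A ≠ 0) (hC : C ≠ 0)
    (hΔ : 0 ≤ B ^ 2 * C ^ 2 + A * C * (A * E - B * D)) (x : ℝ) :
    -(A * C) * x ^ 2 - 2 * (B * C) * x + (A * E - B * D) =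
      ((-(B * C) + √(B ^ 2 * C ^ 2 + A * C * (A * E - B * D))) / (A * C) - x) *
        (√(B ^ 2 * C ^ 2 + A * C * (A * E - B * D)) + C * (A * x + B)) := by
  have hs := Real.sq_sqrt hΔ
  generalize √(B ^ 2 * C ^ 2 + A * C * (A * E - B * D)) = s at hs ⊢
  field_simp
  linear_combination -hs

theorem linear_nonpos_of_mem_Icc {A B x : ℝ} (hB : B ≤ 0) (hAB : A + B ≤ 0)
    (hx : x ∈ Icc (0 : ℝ) 1) : A * x + B ≤ 0 := by
  obtain ⟨hx0, hx1⟩ := hx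
  rw [show A * x + B = (1 - x) * B + x * (A + B) by ring]
  exact add_nonpos (mul_nonpos_of_nonneg_of_nonpos (sub_nonneg.2 hx1) hB)
    (mul_nonpos_of_nonneg_of_nonpos hx0 hAB)

noncomputable section

theorem stmt9 (A B C D E : ℝ)
    (hC : C < 0) (hB : B ≤ 0) (hA : A ≠ 0) (hAB : A + B ≤ 0)
    (hΔ : 0 ≤ B ^ 2 * C ^ 2 + A * C * (A * E - B * D))
    (hden : ∀ x ∈ Set.Icc (0 : ℝ) 1, C * x ^ 2 + D * x + E ≠ 0) :
    let f : ℝ → ℝ := fun x => (A * x + B) / (C * x ^ 2 + D * x + E)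
    let r := (-(B * C) + Real.sqrt (B ^ 2 * C ^ 2 + A * C * (A * E - B * D))) / (A * C)
    MonotoneOn f (Set.Icc (0 : ℝ) 1 ∩ Set.Iic r) ∧
    AntitoneOn f (Set.Icc (0 : ℝ) 1 ∩ Set.Ici r) := by
  intro f r
  refine monotoneOn_Iic_antitoneOn_Ici_of_hasDerivAt (convex_Icc 0 1)
    (w := fun x => (√(B ^ 2 * C ^ 2 + A * C * (A * E - B * D)) + C * (A * x + B)) /
      (C * x ^ 2 + D * x + E) ^ 2) (fun x hx => ?_) fun x hx => ?_
  · convert hasDerivAt_linear_div_quadratic A B C D E (hden x hx) using 1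
    rw [deriv_numerator_linear_div_quadratic_eq_mul hA hC.ne hΔ x, mul_div_assoc]
  · exact div_nonneg (add_nonneg (Real.sqrt_nonneg _)
      (mul_nonneg_of_nonpos_of_nonpos hC.le (linear_nonpos_of_mem_Icc hB hAB hx))) (sq_nonneg _)
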